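/- For every n >= 1, the number of n-step preimages of the block 000 under elementary CA rule 130 equals 4^{n+1} - 3. -/

import Mathlib

/-!
Write `N b` for the number of `n`-step preimages of a block `b` and `A` for that of the single
cell `1`. Since `f130 x y z = 1` iff `x = y` and `z = 1`, the blocks `111`, `110`, `011` and `101`
each have exactly one preimage: `1^(2n+3)`, `1^(2n+2)0`, `01^(2n+2)` and `x01^(2n+1)`, where
`x = 1` iff `n` is even. By locality, the preimages of the blocks with a `1` in a fixed position
are a cylinder over the preimages of `1` with two free cells, so `∑_{b_i = 1} N b = 4 A` for
`i = 0, 1, 2`; hence `N 100 = N 010 = N 001 = 4 A - 3`. Then `A (n+1) = N 001 + N 111 = 4 A - 2`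
gives `3 A = 4^n + 2`, and counting all `2^(2n+3)` words leaves
`N 000 = 2^(2n+3) - 3 (4 A - 3) - 4 = 4^(n+1) - 3`.
-/

/-- Local rule of elementary CA 130: f(x,y,z)=1 iff (x,y,z)=(0,0,1) or (1,1,1). -/
def f130 (x y z : Bool) : Bool := (!x && !y && z) || (x && y && z)

/-- Block evolution operator: maps a_0...a_{m-1} to the length m-2 string with
entries f(a_i,a_{i+1},a_{i+2}). -/
def bstep (a : List Bool) : List Bool :=
  (List.range (a.length - 2)).map
    (fun i => f130 (a.getD i false) (a.getD (i+1) false) (a.getD (i+2) false))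

/-- n-step preimage set of a length-3 block b: binary strings of length 2n+3
mapped to b by n applications of the block evolution operator. -/
def preim (n : ℕ) (b : List Bool) : Set (List Bool) :=
  {a | a.length = 2*n+3 ∧ bstep^[n] a = b}

open Finset

theorem f130_eq_true_iff {x y z : Bool} : f130 x y z = true ↔ x = y ∧ z = true := by
  cases x <;> cases y <;> cases z <;> decide

theorem f130_eq_false_iff {x y z : Bool} : f130 x y z = false ↔ x ≠ y ∨ z = false := by
  cases x <;> cases y <;> cases z <;> decide

theorem bstep_cons (x y z : Bool) (t : List Bool) :
    bstep (x :: y :: z :: t) = f130 x y z :: bstep (y :: z :: t) := by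
  simp [bstep, List.range_succ_eq_map]

theorem length_bstep (a : List Bool) : (bstep a).length = a.length - 2 := by
  simp [bstep]

theorem bstep_eq_nil {a : List Bool} : bstep a = [] ↔ a.length ≤ 2 := by
  simp only [bstep, List.map_eq_nil_iff, List.range_eq_nil]
  omega

theorem bstep_eq_cons_iff {a l : List Bool} {c : Bool} :
    bstep a = c :: l ↔
      ∃ x y z t, a = x :: y :: z :: t ∧ f130 x y z = c ∧ bstep (y :: z :: t) = l := by
  rcases a with _ | ⟨x, _ | ⟨y, _ | ⟨z, t⟩⟩⟩ <;> simp [bstep_cons, bstep_eq_nil.2, -Bool.exists_bool]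

theorem bstep_tail (a : List Bool) : bstep a.tail = (bstep a).tail := by
  rcases a with _ | ⟨x, _ | ⟨y, _ | ⟨z, t⟩⟩⟩ <;> simp [bstep_cons, bstep_eq_nil.2]

theorem bstep_take (a : List Bool) (m : ℕ) : bstep (a.take (m + 2)) = (bstep a).take m := by
  induction a generalizing m with
  | nil => simp [length_bstep]
  | cons x l ih =>
    rcases l with _ | ⟨y, _ | ⟨z, t⟩⟩
    · simp [length_bstep]
    · simp [length_bstep]
    · cases m
      · simp [bstep_eq_nil]
      · simp [bstep_cons, ← ih]

theorem length_iterate_bstep (n : ℕ) (a : List Bool) :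
    (bstep^[n] a).length = a.length - 2 * n := by
  induction n generalizing a with
  | zero => rfl
  | succ n ih => rw [Function.iterate_succ_apply, ih, length_bstep]; omega

theorem length_eq_of_iterate_bstep_eq {n : ℕ} {a b : List Bool} (hb : b ≠ [])
    (h : bstep^[n] a = b) : a.length = 2 * n + b.length := by
  have hlen := length_iterate_bstep n a
  rw [h] at hlen
  have := List.length_pos_iff.2 hb
  omega

theorem iterate_bstep_take (n m : ℕ) (a : List Bool) :
    bstep^[n] (a.take (m + 2 * n)) = (bstep^[n] a).take m := by
  induction n generalizing a with
  | zero => rfl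
  | succ n ih =>
    rw [Function.iterate_succ_apply, Function.iterate_succ_apply, ← ih,
      ← bstep_take, show m + 2 * n + 2 = m + 2 * (n + 1) by ring]

theorem iterate_bstep_drop (n j : ℕ) (a : List Bool) :
    bstep^[n] (a.drop j) = (bstep^[n] a).drop j := by
  have hcomm : Function.Commute bstep (List.drop j) := fun a => by
    induction j generalizing a with
    | zero => rfl
    | succ j ih => simp only [← List.tail_drop, bstep_tail, ih]
  exact hcomm.iterate_left n a

theorem bstep_eq_replicate_true {m : ℕ} (hm : 2 ≤ m) {a : List Bool} :
    bstep a = List.replicate m true ↔ a = List.replicate (m + 2) true := by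
  induction m, hm using Nat.le_induction generalizing a with
  | base => simp [List.replicate_succ, bstep_eq_cons_iff, bstep_eq_nil, f130_eq_true_iff]
  | succ m hm ih => simp [List.replicate_succ, bstep_eq_cons_iff, ih, f130_eq_true_iff]

theorem bstep_eq_replicate_true_append_false {m : ℕ} (hm : 2 ≤ m) {a : List Bool} :
    bstep a = List.replicate m true ++ [false] ↔
      a = List.replicate (m + 2) true ++ [false] := by
  induction m, hm using Nat.le_induction generalizing a with
  | base => simp [List.replicate_succ, bstep_eq_cons_iff, bstep_eq_nil, f130]
  | succ m hm ih => simp [List.replicate_succ, bstep_eq_cons_iff, ih, f130_eq_true_iff]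

theorem bstep_eq_false_cons_replicate_true {m : ℕ} (hm : 2 ≤ m) {a : List Bool} :
    bstep a = false :: List.replicate m true ↔ a = false :: List.replicate (m + 2) true := by
  simp [bstep_eq_cons_iff, bstep_eq_replicate_true hm, List.replicate_succ, f130_eq_false_iff]

theorem bstep_eq_cons_false_cons_replicate_true {m : ℕ} (hm : 2 ≤ m) (x : Bool)
    {a : List Bool} :
    bstep a = x :: false :: List.replicate m true ↔
      a = (!x) :: false :: List.replicate (m + 2) true := by
  cases x <;>
    simp [bstep_eq_cons_iff, bstep_eq_false_cons_replicate_true hm, List.replicate_succ, f130]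

theorem bstep_eq_101 {a : List Bool} :
    bstep a = [true, false, true] ↔ a = [false, false, true, true, true] := by
  simp [bstep_eq_cons_iff, bstep_eq_nil, f130_eq_true_iff, f130_eq_false_iff]

def words (L : ℕ) : Finset (List Bool) :=
  (univ : Finset (List.Vector Bool L)).map ⟨List.Vector.toList, List.Vector.toList_injective⟩

theorem mem_words {L : ℕ} {w : List Bool} : w ∈ words L ↔ w.length = L := by
  simp only [words, mem_map, mem_univ, true_and, Function.Embedding.coeFn_mk]
  exact ⟨fun ⟨v, hv⟩ => hv ▸ v.toList_length, fun h => ⟨⟨w, h⟩, rfl⟩⟩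

theorem card_words (L : ℕ) : #(words L) = 2 ^ L := by
  simp [words, card_vector]

theorem sum_words_three {M : Type*} [AddCommMonoid M] (g : List Bool → M) :
    ∑ b ∈ words 3, g b = ∑ x, ∑ y, ∑ z, g [x, y, z] := by
  have hwords : words 3 = univ.image (fun p : Bool × Bool × Bool => [p.1, p.2.1, p.2.2]) := by
    ext b
    simp [mem_words, List.length_eq_three, eq_comm]
  rw [hwords, sum_image (fun p _ q _ h => by simpa [Prod.ext_iff] using h)]
  simp only [Fintype.sum_prod_type]

theorem card_filter_drop_take_mem {m : ℕ} (S : Finset (List Bool))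
    (hS : ∀ v ∈ S, v.length = m) (i j : ℕ) :
    #{w ∈ words (i + m + j) | (w.drop i).take m ∈ S} = 2 ^ i * #S * 2 ^ j := by
  rw [← card_words i, ← card_words j, ← card_product, ← card_product]
  symm
  apply card_nbij' (fun p => p.1.1 ++ p.1.2 ++ p.2)
    (fun w => ((w.take i, (w.drop i).take m), (w.drop i).drop m))
  · rintro ⟨⟨u, v⟩, x⟩ h
    simp only [coe_product, Set.mem_prod, mem_coe, mem_words] at h
    obtain ⟨⟨hu, hv⟩, hx⟩ := h
    simp only [coe_filter, Set.mem_ofPred_eq, mem_words, List.append_assoc, List.length_append,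
      hu, hS v hv, hx, List.drop_left', List.take_left', hv, and_true]
    omega
  · intro w h
    simp only [coe_filter, Set.mem_ofPred_eq, mem_words] at h
    simp only [coe_product, Set.mem_prod, mem_coe, mem_words, List.drop_drop, List.length_take,
      List.length_drop, h.1, h.2, inf_eq_left, and_true]
    omega
  · rintro ⟨⟨u, v⟩, x⟩ h
    simp only [coe_product, Set.mem_prod, mem_coe, mem_words] at h
    simp [h.1.1, hS v h.1.2]
  · intro w _
    simp

def fiber (n : ℕ) (b : List Bool) : Finset (List Bool) :=
  {a ∈ words (2 * n + b.length) | bstep^[n] a = b}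

theorem mem_fiber {n : ℕ} {a b : List Bool} (hb : b ≠ []) :
    a ∈ fiber n b ↔ bstep^[n] a = b := by
  rw [fiber, mem_filter, mem_words]
  exact ⟨And.right, fun h => ⟨length_eq_of_iterate_bstep_eq hb h, h⟩⟩

theorem preim_eq_fiber (n : ℕ) {b : List Bool} (hb : b.length = 3) :
    preim n b = fiber n b := by
  have hb' : b ≠ [] := List.ne_nil_of_length_pos (by omega)
  ext a
  simp only [preim, Set.mem_ofPred_eq, mem_coe, mem_fiber hb']
  exact ⟨And.right, fun h => ⟨hb ▸ length_eq_of_iterate_bstep_eq hb' h, h⟩⟩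

theorem iterate_bstep_eq_iff {u : ℕ → List Bool} (hu : ∀ n a, bstep a = u n ↔ a = u (n + 1))
    (n : ℕ) (a : List Bool) : bstep^[n] a = u 0 ↔ a = u n := by
  induction n generalizing a with
  | zero => rfl
  | succ n ih => rw [Function.iterate_succ_apply, ih, hu]

theorem fiber_eq_singleton {u : ℕ → List Bool} (hu : ∀ n a, bstep a = u n ↔ a = u (n + 1))
    (h0 : u 0 ≠ []) (n : ℕ) : fiber n (u 0) = {u n} := by
  ext a
  rw [mem_fiber h0, iterate_bstep_eq_iff hu, mem_singleton]

theorem fiber_111 (n : ℕ) : fiber n [true, true, true] = {List.replicate (2 * n + 3) true} :=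
  fiber_eq_singleton (u := fun n => List.replicate (2 * n + 3) true)
    (fun _ _ => bstep_eq_replicate_true (by omega)) (by simp) n

theorem fiber_110 (n : ℕ) :
    fiber n [true, true, false] = {List.replicate (2 * n + 2) true ++ [false]} :=
  fiber_eq_singleton (u := fun n => List.replicate (2 * n + 2) true ++ [false])
    (fun _ _ => bstep_eq_replicate_true_append_false (by omega)) (by simp) n

theorem fiber_011 (n : ℕ) :
    fiber n [false, true, true] = {false :: List.replicate (2 * n + 2) true} :=
  fiber_eq_singleton (u := fun n => false :: List.replicate (2 * n + 2) true)
    (fun _ _ => bstep_eq_false_cons_replicate_true (by omega)) (by simp) n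

theorem fiber_101 (n : ℕ) :
    fiber n [true, false, true] =
      {decide (Even n) :: false :: List.replicate (2 * n + 1) true} := by
  refine fiber_eq_singleton
    (u := fun n => decide (Even n) :: false :: List.replicate (2 * n + 1) true)
    (fun n a => ?_) (by simp) n
  rcases n with _ | n
  · exact bstep_eq_101
  · simp only [bstep_eq_cons_false_cons_replicate_true (show 2 ≤ 2 * (n + 1) + 1 by omega),
      Nat.even_add_one, decide_not]
    rfl

theorem card_filter_iterate_bstep (n : ℕ) (p : List Bool → Prop) [DecidablePred p] :
    #{w ∈ words (2 * n + 3) | p (bstep^[n] w)} =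
      ∑ x, ∑ y, ∑ z, if p [x, y, z] then #(fiber n [x, y, z]) else 0 := by
  rw [card_eq_sum_card_fiberwise (f := bstep^[n]) (t := {b ∈ words 3 | p b}), sum_filter,
    sum_words_three]
  · refine Fintype.sum_congr _ _ fun x => Fintype.sum_congr _ _ fun y =>
      Fintype.sum_congr _ _ fun z => ?_
    split_ifs with hp
    · congr 1
      ext w
      simp only [filter_filter, mem_filter, mem_fiber (List.cons_ne_nil _ _), mem_words]
      refine ⟨fun h => h.2.2, fun h => ⟨?_, h ▸ hp, h⟩⟩
      exact length_eq_of_iterate_bstep_eq (List.cons_ne_nil _ _) h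
    · rfl
  · intro w hw
    simp only [coe_filter, Set.mem_ofPred_eq, mem_words] at hw ⊢
    exact ⟨by rw [length_iterate_bstep]; omega, hw.2⟩

theorem sum_card_fiber (n : ℕ) : ∑ x, ∑ y, ∑ z, #(fiber n [x, y, z]) = 2 ^ (2 * n + 3) := by
  simpa [card_words] using (card_filter_iterate_bstep n (fun _ => True)).symm

theorem sum_card_fiber_of_getD (n : ℕ) {i : ℕ} (hi : i ≤ 2) :
    (∑ x, ∑ y, ∑ z, if [x, y, z].getD i false = true then #(fiber n [x, y, z]) else 0) =
      4 * #(fiber n [true]) := by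
  refine (card_filter_iterate_bstep n (fun b => b.getD i false = true)).symm.trans ?_
  have hcylinder : ∀ w ∈ words (2 * n + 3), (bstep^[n] w).getD i false = true ↔
      (w.drop i).take (2 * n + 1) ∈ fiber n [true] := by
    intro w hw
    have hlt : i < (bstep^[n] w).length := by rw [length_iterate_bstep, mem_words.1 hw]; omega
    rw [mem_fiber (List.cons_ne_nil _ _), show 2 * n + 1 = 1 + 2 * n by ring, iterate_bstep_take,
      iterate_bstep_drop, List.take_one_drop_eq_of_lt_length hlt, List.getD_eq_getElem _ _ hlt]
    simp
  have hlen : ∀ v ∈ fiber n [true], v.length = 2 * n + 1 := fun v hv =>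
    mem_words.1 (mem_filter.1 hv).1
  have hcard := card_filter_drop_take_mem (fiber n [true]) hlen i (2 - i)
  rw [show i + (2 * n + 1) + (2 - i) = 2 * n + 3 by omega] at hcard
  rw [filter_congr hcylinder, hcard]
  interval_cases i <;> ring

theorem card_fiber_true_succ (n : ℕ) :
    #(fiber (n + 1) [true]) = #(fiber n [false, false, true]) + #(fiber n [true, true, true]) := by
  calc #(fiber (n + 1) [true])
      = #{w ∈ words (2 * n + 3) | bstep (bstep^[n] w) = [true]} := by
        simp only [fiber, Function.iterate_succ_apply']; rfl
    _ = _ := card_filter_iterate_bstep n (fun b => bstep b = [true])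
    _ = _ := by simp [bstep, f130, add_comm]

theorem three_mul_card_fiber_true (n : ℕ) : 3 * #(fiber n [true]) = 4 ^ n + 2 := by
  induction n with
  | zero => decide
  | succ n ih =>
    have h2 := sum_card_fiber_of_getD n (i := 2) le_rfl
    simp only [Fintype.sum_bool, List.getD_cons_zero, List.getD_cons_succ, Bool.false_eq_true,
      ↓reduceIte, fiber_011, fiber_101, fiber_111, card_singleton] at h2
    rw [card_fiber_true_succ, fiber_111, card_singleton, pow_succ]
    omega

theorem stmt4_general (n : ℕ) :
    (preim n [false, false, false]).ncard = 4^(n+1) - 3 := by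
  rw [preim_eq_fiber n rfl, Set.ncard_coe_finset]
  have htotal := sum_card_fiber n
  have h0 := sum_card_fiber_of_getD n (i := 0) (by norm_num)
  have h1 := sum_card_fiber_of_getD n (i := 1) (by norm_num)
  have h2 := sum_card_fiber_of_getD n (i := 2) le_rfl
  simp only [Fintype.sum_bool, List.getD_cons_zero, List.getD_cons_succ, Bool.false_eq_true,
    ↓reduceIte, fiber_110, fiber_011, fiber_101, fiber_111, card_singleton] at htotal h0 h1 h2
  have hA := three_mul_card_fiber_true n
  have hpow : 2 ^ (2 * n + 3) = 8 * 4 ^ n := by rw [pow_add, pow_mul]; ring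
  rw [pow_succ]
  omega

theorem stmt4 (n : ℕ) (hn : 1 ≤ n) :
    (preim n [false, false, false]).ncard = 4^(n+1) - 3 :=
  stmt4_general n
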